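/- Let P be a crisp extended LP and let (L^i, U^i) for i ∈ ℕ be the stable-approximator iteration starting from (⊥,⊤). For every i ∈ ℕ, setting σ^i := ζ(L^i) and δ^i := Lit(Π) ∖ ζ(U^i), one has ζ(lfp(X ↦ A_P(X,U^i)₁)) = lfp(PF^{σ^i,δ^i}). -/
import Mathlib


open Classical

/-- Literals over a type `A` of atoms: atoms `p` and strongly negated atoms `¬p`. -/
inductive Lit (A : Type*) where
  | pos : A → Lit A
  | neg : A → Lit A

/-- Crisp paraconsistent interpretations: each atom gets a pair of Boolean truth values
(truth, falsity); `true` plays the role of 1 and `false` of 0.  The order is the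
pointwise truth order `≤t`. -/
abbrev CInterp (A : Type*) := A → Bool × Bool

/-- Evaluation of a literal under a crisp paraconsistent interpretation. -/
def clit {A : Type*} (I : CInterp A) : Lit A → Bool
  | .pos p => (I p).1
  | .neg p => (I p).2

/-- A crisp rule body: a finite set of positive body literals and a finite
set of weakly negated body literals. -/
structure CBody (A : Type*) where
  pos : Finset (Lit A)
  wneg : Finset (Lit A)

/-- A crisp extended logic program: a set of rules `ℓ ← B`. -/
abbrev CProg (A : Type*) := Set (Lit A × CBody A)

/-- Pair evaluation of a crisp body: `1` iff all positive body literals are true in `I`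
and all weakly negated body literals are false in `J`. -/
noncomputable def cbody {A : Type*} (I J : CInterp A) (B : CBody A) : Bool :=
  if (∀ ℓ ∈ B.pos, clit I ℓ = true) ∧ (∀ ℓ ∈ B.wneg, clit J ℓ = false) then true else false

/-- The (lower half of the) crisp approximator `A_P(·,·)₁`: the head of an atom `p`
gets the max (over rules) of the pair-evaluations of the corresponding bodies
(max over the empty set being 0, i.e. `false`). -/
noncomputable def cA1 {A : Type*} (P : CProg A) (L U : CInterp A) : CInterp A :=
  fun p => (if ∃ B, (Lit.pos p, B) ∈ P ∧ cbody L U B = true then true else false,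
            if ∃ B, (Lit.neg p, B) ∈ P ∧ cbody L U B = true then true else false)

/-- The crisp approximator `A_P` on pairs. -/
noncomputable def cA {A : Type*} (P : CProg A) (LU : CInterp A × CInterp A) :
    CInterp A × CInterp A :=
  (cA1 P LU.1 LU.2, cA1 P LU.2 LU.1)

/-- The order isomorphism `ζ` from crisp paraconsistent interpretations to sets of literals. -/
def zeta {A : Type*} (I : CInterp A) : Set (Lit A) :=
  (Lit.pos '' {p | (I p).1 = true}) ∪ (Lit.neg '' {p | (I p).2 = true})

/-- Least pre-fixpoint (Knaster–Tarski least fixpoint for monotone maps). -/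
def lfpOf {α : Type*} [CompleteLattice α] (f : α → α) : α := sInf {x | f x ≤ x}

/-- Greatest post-fixpoint (Knaster–Tarski greatest fixpoint for monotone maps). -/
def gfpOf {α : Type*} [CompleteLattice α] (f : α → α) : α := sSup {x | x ≤ f x}

/-- The stable approximator `A_P^st`. -/
noncomputable def cAst {A : Type*} (P : CProg A) (LU : CInterp A × CInterp A) :
    CInterp A × CInterp A :=
  (lfpOf (fun X => cA1 P X LU.2), lfpOf (fun X => cA1 P X LU.1))

/-- The stable-approximator iteration `(L^i, U^i)` starting from `(⊥,⊤)`. -/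
noncomputable def iterLU {A : Type*} (P : CProg A) : ℕ → CInterp A × CInterp A
  | 0 => (⊥, ⊤)
  | i + 1 => cAst P (iterLU P i)

/-- Sakama's proven-facts operator `PF^{σ,δ}`. -/
def PF {A : Type*} (P : CProg A) (σ δ : Set (Lit A)) (α : Set (Lit A)) : Set (Lit A) :=
  {ℓ | ∃ B, (ℓ, B) ∈ P ∧ ↑B.pos ⊆ σ ∪ α ∧ ↑B.wneg ⊆ δ}

/-- Sakama's default-facts operator `DF^{σ,δ}`. -/
def DF {A : Type*} (P : CProg A) (σ δ : Set (Lit A)) (β : Set (Lit A)) : Set (Lit A) :=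
  {ℓ | ∀ B, (ℓ, B) ∈ P → (↑B.pos ∩ (β ∪ δ)).Nonempty ∨ (↑B.wneg ∩ σ).Nonempty}



section Aux

variable {A : Type*}

lemma lfpOf_le' {α : Type*} [CompleteLattice α] {f : α → α} {x : α} (h : f x ≤ x) :
    lfpOf f ≤ x := sInf_le h

lemma lfpOf_prefix' {α : Type*} [CompleteLattice α] {f : α → α} (hf : Monotone f) :
    f (lfpOf f) ≤ lfpOf f :=
  le_sInf fun x hx => le_trans (hf (sInf_le hx)) hx

lemma lfpOf_mono' {α : Type*} [CompleteLattice α] {f g : α → α} (h : ∀ x, f x ≤ g x) :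
    lfpOf f ≤ lfpOf g :=
  sInf_le_sInf fun x hx => le_trans (h x) hx

lemma bool_le_true {a b : Bool} (h : a ≤ b) (ha : a = true) : b = true := by
  subst ha; cases b
  · exact absurd h (by decide)
  · rfl

lemma mem_zeta {I : CInterp A} {ℓ : Lit A} : ℓ ∈ zeta I ↔ clit I ℓ = true := by
  cases ℓ <;> simp [zeta, clit]

lemma zeta_subset_of_le {I J : CInterp A} (h : I ≤ J) : zeta I ⊆ zeta J := by
  intro ℓ hl
  rw [mem_zeta] at hl ⊢
  cases ℓ with
  | pos p => exact bool_le_true (h p).1 hl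
  | neg p => exact bool_le_true (h p).2 hl

lemma le_of_zeta_subset {I J : CInterp A} (h : zeta I ⊆ zeta J) : I ≤ J := by
  intro p
  constructor
  · cases hi : (I p).1 with
    | false => exact Bool.false_le _
    | true =>
      have h1 : Lit.pos p ∈ zeta I := mem_zeta.mpr (by simpa [clit] using hi)
      have h2 := mem_zeta.mp (h h1)
      simp only [clit] at h2
      rw [h2]
  · cases hi : (I p).2 with
    | false => exact Bool.false_le _
    | true =>
      have h1 : Lit.neg p ∈ zeta I := mem_zeta.mpr (by simpa [clit] using hi)
      have h2 := mem_zeta.mp (h h1)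
      simp only [clit] at h2
      rw [h2]

noncomputable def xi (S : Set (Lit A)) : CInterp A :=
  fun p => (if Lit.pos p ∈ S then true else false, if Lit.neg p ∈ S then true else false)

lemma zeta_xi (S : Set (Lit A)) : zeta (xi S) = S := by
  ext ℓ; rw [mem_zeta]; cases ℓ <;> simp [xi, clit]

lemma cbody_iff {I J : CInterp A} {B : CBody A} :
    cbody I J B = true ↔
      ((∀ ℓ ∈ B.pos, clit I ℓ = true) ∧ (∀ ℓ ∈ B.wneg, clit J ℓ = false)) := by
  simp [cbody]

lemma cbody_mono_left {X Y U : CInterp A} (h : X ≤ Y) {B : CBody A}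
    (hB : cbody X U B = true) : cbody Y U B = true := by
  rw [cbody_iff] at hB ⊢
  refine ⟨fun ℓ hl => ?_, hB.2⟩
  have := hB.1 ℓ hl
  cases ℓ with
  | pos p => exact bool_le_true (h p).1 this
  | neg p => exact bool_le_true (h p).2 this

lemma cbody_anti_right {X U U' : CInterp A} (h : U' ≤ U) {B : CBody A}
    (hB : cbody X U B = true) : cbody X U' B = true := by
  rw [cbody_iff] at hB ⊢
  refine ⟨hB.1, fun ℓ hl => ?_⟩
  have hU := hB.2 ℓ hl
  cases hu' : clit U' ℓ with
  | false => rfl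
  | true =>
    exfalso
    have : clit U ℓ = true := by
      cases ℓ with
      | pos p => exact bool_le_true (h p).1 hu'
      | neg p => exact bool_le_true (h p).2 hu'
    rw [hU] at this; exact absurd this (by decide)

lemma ite_bool_le {c c' : Prop} [Decidable c] [Decidable c'] (h : c → c') :
    (if c then true else false) ≤ (if c' then true else false) := by
  by_cases hc : c
  · simp [hc, h hc]
  · simp [hc]

lemma cA1_mono_left (P : CProg A) {X Y U : CInterp A} (h : X ≤ Y) :
    cA1 P X U ≤ cA1 P Y U := by
  intro p
  constructor <;> exact ite_bool_le fun ⟨B, hB, hb⟩ => ⟨B, hB, cbody_mono_left h hb⟩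

lemma cA1_anti_right (P : CProg A) {X U U' : CInterp A} (h : U' ≤ U) :
    cA1 P X U ≤ cA1 P X U' := by
  intro p
  constructor <;> exact ite_bool_le fun ⟨B, hB, hb⟩ => ⟨B, hB, cbody_anti_right h hb⟩

lemma PF_mono (P : CProg A) (σ δ : Set (Lit A)) : Monotone (PF P σ δ) := by
  intro α α' h ℓ hl
  obtain ⟨B, hB, hpos, hneg⟩ := hl
  exact ⟨B, hB, hpos.trans (Set.union_subset_union_right σ h), hneg⟩

lemma zeta_cA1 (P : CProg A) (X U : CInterp A) :
    zeta (cA1 P X U) = PF P ∅ (Set.univ \ zeta U) (zeta X) := by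
  have key : ∀ B : CBody A, cbody X U B = true ↔
      (↑B.pos ⊆ (∅ : Set (Lit A)) ∪ zeta X ∧ ↑B.wneg ⊆ Set.univ \ zeta U) := by
    intro B
    rw [cbody_iff]
    simp only [Set.empty_union, Set.subset_def, Finset.mem_coe, Set.mem_diff, Set.mem_univ,
      true_and, mem_zeta, Bool.not_eq_true]
  ext ℓ
  rw [mem_zeta]
  cases ℓ <;> simp only [clit, cA1, PF, Set.mem_setOf_eq, if_true_left, key] <;>
    simp

lemma zeta_lfp (P : CProg A) (U : CInterp A) :
    zeta (lfpOf (fun X => cA1 P X U)) = lfpOf (PF P ∅ (Set.univ \ zeta U)) := by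
  set δ := Set.univ \ zeta U with hδ
  set F := lfpOf (fun X => cA1 P X U) with hF
  set G := lfpOf (PF P ∅ δ) with hG
  have hfmono : Monotone (fun X => cA1 P X U) := fun X Y h => cA1_mono_left P h
  have hgmono : Monotone (PF P ∅ δ) := PF_mono P ∅ δ
  apply subset_antisymm
  · have h1 : cA1 P (xi G) U ≤ xi G := by
      apply le_of_zeta_subset
      rw [zeta_cA1, zeta_xi]
      exact lfpOf_prefix' hgmono
    calc zeta F ⊆ zeta (xi G) := zeta_subset_of_le (lfpOf_le' h1)
      _ = G := zeta_xi G
  · apply lfpOf_le'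
    rw [show PF P ∅ δ (zeta F) = zeta (cA1 P F U) from (zeta_cA1 P F U).symm]
    exact zeta_subset_of_le (lfpOf_prefix' hfmono)

lemma lfpOf_PF_sigma (P : CProg A) {σ δ : Set (Lit A)} (h : σ ⊆ lfpOf (PF P ∅ δ)) :
    lfpOf (PF P σ δ) = lfpOf (PF P ∅ δ) := by
  apply le_antisymm
  · apply lfpOf_le'
    have hG : PF P ∅ δ (lfpOf (PF P ∅ δ)) ⊆ lfpOf (PF P ∅ δ) := lfpOf_prefix' (PF_mono P ∅ δ)
    intro ℓ hl
    obtain ⟨B, hB, hpos, hneg⟩ := hl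
    rw [Set.union_eq_self_of_subset_left h] at hpos
    exact hG ⟨B, hB, by rwa [Set.empty_union], hneg⟩
  · refine lfpOf_mono' fun α ℓ hl => ?_
    obtain ⟨B, hB, hpos, hneg⟩ := hl
    rw [Set.empty_union] at hpos
    exact ⟨B, hB, hpos.trans Set.subset_union_right, hneg⟩

lemma iter_mono (P : CProg A) :
    ∀ i, (iterLU P i).1 ≤ (iterLU P (i+1)).1 ∧ (iterLU P (i+1)).2 ≤ (iterLU P i).2
  | 0 => ⟨bot_le, le_top⟩
  | (i+1) => by
    obtain ⟨h1, h2⟩ := iter_mono P i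
    constructor
    · exact lfpOf_mono' fun X => cA1_anti_right P h2
    · exact lfpOf_mono' fun X => cA1_anti_right P h1

end Aux

/-- Along the stable-approximator iteration `(L^i, U^i)` starting from
`(⊥,⊤)`: for every `i`, with `σ^i := ζ(L^i)` and `δ^i := Lit(Π) ∖ ζ(U^i)`,
`ζ(lfp(X ↦ A_P(X,U^i)₁)) = lfp(PF^{σ^i,δ^i})`. -/
theorem zeta_lfp_eq_lfp_PF {A : Type*}
    (P : CProg A) (hfin : P.Finite) (i : ℕ) :
    zeta (lfpOf (fun X => cA1 P X (iterLU P i).2)) =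
      lfpOf (PF P (zeta (iterLU P i).1) (Set.univ \ zeta (iterLU P i).2)) := by
  rw [zeta_lfp P (iterLU P i).2]
  refine (lfpOf_PF_sigma P ?_).symm
  rw [← zeta_lfp P (iterLU P i).2]
  have h1 : (iterLU P i).1 ≤ lfpOf (fun X => cA1 P X (iterLU P i).2) := (iter_mono P i).1
  exact zeta_subset_of_le h1
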